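/- (Conditional single-batch unbiasedness) Let Z be a nonempty finite set, T a nonempty subset of Z, s : T → ℝ a score function, and m ≥ 1. For x ∈ Z^m, let N(x) be the number of indices i with x(i) ∈ T, and define A(x) = (1/N(x)) · Σ_{i : x(i) ∈ T} s(x(i)) when N(x) > 0. If x is drawn uniformly at random from Z^m, then the conditional expectation of A(x) given the event {N(x) ≥ 1} equals s_T = (1/|T|) Σ_{t ∈ T} s(t). -/

import Mathlib

/-!
Write `A(x) = ∑_{t ∈ T} s(t) · c_t(x) / N(x)`, where `c_t(x)` counts the coordinates of `x` equal
to `t`. Summed over all `x`, the weight `W(t) = ∑_x c_t(x) / N(x)` does not depend on `t ∈ T`,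
since composing with the transposition of `t` and `t'` is a bijection of `Z^m` that preserves `N`
and exchanges `c_t` and `c_{t'}`. As `∑_{t ∈ T} c_t(x) / N(x) = 1` whenever `N(x) ≥ 1`, the
weights add up to the number of such `x`, so each equals that number divided by `|T|`.
-/

open Finset

/-- The number of coordinates of the tuple `x : Z^m` that lie in `T`. -/
def hitCount {Z : Type*} [DecidableEq Z] (T : Finset Z) {m : ℕ} (x : Fin m → Z) : ℕ :=
  (Finset.univ.filter fun i => x i ∈ T).card

/-- `A(x)`: the average of the score `s` over the coordinates of `x` lying in `T`
if at least one coordinate lies in `T`, and `0` otherwise. -/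
noncomputable def batchAvg {Z : Type*} [DecidableEq Z] (T : Finset Z) (s : T → ℝ)
    {m : ℕ} (x : Fin m → Z) : ℝ :=
  if h : 0 < hitCount T x then
    (∑ i ∈ (Finset.univ.filter fun i => x i ∈ T).attach,
        s ⟨x i.1, (Finset.mem_filter.mp i.2).2⟩) / (hitCount T x : ℝ)
  else 0

section
variable {Z : Type*} [DecidableEq Z] {m : ℕ}

def coordCount (z : Z) (x : Fin m → Z) : ℕ := #{i | x i = z}

/-- When `x` misses `T` this is `0 / 0 = 0`, so `batchAvg_eq_sum_mul_hitFreq` holds for every `x`. -/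
noncomputable def hitFreq (T : Finset Z) (z : Z) (x : Fin m → Z) : ℝ :=
  coordCount z x / hitCount T x

lemma hitCount_eq_sum_coordCount (T : Finset Z) (x : Fin m → Z) :
    hitCount T x = ∑ t ∈ T, coordCount t x := by
  rw [hitCount, card_eq_sum_card_fiberwise (f := x) (t := T) fun i hi => by simpa using hi]
  refine sum_congr rfl fun t ht => congrArg card ?_
  ext i
  simp only [mem_filter, mem_univ, true_and, and_iff_right_iff_imp]
  exact fun h => h ▸ ht

lemma sum_hitFreq (T : Finset Z) (x : Fin m → Z) :
    ∑ t ∈ T, hitFreq T t x = if 1 ≤ hitCount T x then 1 else 0 := by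
  simp only [hitFreq]
  rw [← sum_div, ← Nat.cast_sum, ← hitCount_eq_sum_coordCount]
  split_ifs with h
  · exact div_self (by positivity)
  · simp [Nat.lt_one_iff.mp (not_le.mp h)]

lemma sum_attach_filter_mem_eq_sum_mul_coordCount (T : Finset Z) (s : T → ℝ) (x : Fin m → Z) :
    ∑ i ∈ (univ.filter fun i => x i ∈ T).attach, s ⟨x i.1, (mem_filter.mp i.2).2⟩
      = ∑ t ∈ T.attach, s t * coordCount t.1 x := by
  rw [← sum_fiberwise_of_maps_to (t := T.attach) fun _ _ => mem_attach _ _]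
  refine sum_congr rfl fun t _ => ?_
  rw [sum_congr rfl fun i hi => congrArg s (mem_filter.mp hi).2, sum_const, nsmul_eq_mul, mul_comm]
  simp only [Subtype.ext_iff]
  rw [filter_attach (fun i => x i = t), card_map, card_attach, filter_filter, coordCount]
  congr 3
  ext i
  simp only [mem_filter, mem_univ, true_and, and_iff_right_iff_imp]
  exact fun h => h ▸ t.2

lemma batchAvg_eq_sum_mul_hitFreq (T : Finset Z) (s : T → ℝ) (x : Fin m → Z) :
    batchAvg T s x = ∑ t ∈ T.attach, s t * hitFreq T t x := by
  simp only [batchAvg, hitFreq, mul_div_assoc', ← sum_div,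
    sum_attach_filter_mem_eq_sum_mul_coordCount, dite_eq_ite, ite_eq_left_iff, not_lt,
    nonpos_iff_eq_zero]
  intro h
  simp [h]

lemma hitCount_perm_comp (T : Finset Z) {σ : Equiv.Perm Z} (hσ : ∀ z, σ z ∈ T ↔ z ∈ T)
    (x : Fin m → Z) : hitCount T (σ ∘ x) = hitCount T x := by
  simp only [hitCount, Function.comp_apply, hσ]

lemma coordCount_perm_comp (σ : Equiv.Perm Z) (z : Z) (x : Fin m → Z) :
    coordCount (σ z) (σ ∘ x) = coordCount z x := by
  simp only [coordCount, Function.comp_apply, σ.apply_eq_iff_eq]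

lemma hitFreq_perm_comp (T : Finset Z) {σ : Equiv.Perm Z} (hσ : ∀ z, σ z ∈ T ↔ z ∈ T) (z : Z)
    (x : Fin m → Z) : hitFreq T (σ z) (σ ∘ x) = hitFreq T z x := by
  rw [hitFreq, hitFreq, coordCount_perm_comp, hitCount_perm_comp T hσ]

lemma swap_apply_mem_iff {T : Finset Z} {t t' : Z} (ht : t ∈ T) (ht' : t' ∈ T) (z : Z) :
    Equiv.swap t t' z ∈ T ↔ z ∈ T := by
  rcases eq_or_ne z t with rfl | h
  · simp [ht, ht']
  rcases eq_or_ne z t' with rfl | h'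
  · simp [ht, ht']
  · rw [Equiv.swap_apply_of_ne_of_ne h h']

lemma hitCount_const {T : Finset Z} {t : Z} (ht : t ∈ T) : hitCount T (fun _ : Fin m => t) = m := by
  simp [hitCount, ht]

lemma one_le_hitCount_of_batchAvg_ne_zero {T : Finset Z} {s : T → ℝ} {x : Fin m → Z}
    (hx : batchAvg T s x ≠ 0) : 1 ≤ hitCount T x :=
  Nat.one_le_iff_ne_zero.mpr fun h => hx (by simp [batchAvg, h])

variable [Fintype Z]

lemma sum_hitFreq_perm (T : Finset Z) {σ : Equiv.Perm Z} (hσ : ∀ z, σ z ∈ T ↔ z ∈ T) (z : Z) :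
    ∑ x : Fin m → Z, hitFreq T (σ z) x = ∑ x : Fin m → Z, hitFreq T z x :=
  (Fintype.sum_equiv (Equiv.piCongrRight fun _ => σ) _ _ fun x =>
    (hitFreq_perm_comp T hσ z x).symm).symm

lemma sum_hitFreq_of_mem {T : Finset Z} {t : Z} (ht : t ∈ T) :
    ∑ x : Fin m → Z, hitFreq T t x = #{x : Fin m → Z | 1 ≤ hitCount T x} / #T := by
  have h_symm : ∀ t' ∈ T, ∑ x : Fin m → Z, hitFreq T t' x = ∑ x : Fin m → Z, hitFreq T t x :=
    fun t' ht' => by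
      simpa only [Equiv.swap_apply_left] using sum_hitFreq_perm T (swap_apply_mem_iff ht ht') t
  have h_total :
      ∑ t' ∈ T, ∑ x : Fin m → Z, hitFreq T t' x = #{x : Fin m → Z | 1 ≤ hitCount T x} := by
    rw [sum_comm]
    simp only [sum_hitFreq, sum_boole]
  rw [eq_div_iff (by exact_mod_cast (card_pos.mpr ⟨t, ht⟩).ne'), ← h_total,
    sum_congr rfl h_symm, sum_const, nsmul_eq_mul, mul_comm]

lemma sum_batchAvg (T : Finset Z) (s : T → ℝ) :
    ∑ x : Fin m → Z, batchAvg T s x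
      = #{x : Fin m → Z | 1 ≤ hitCount T x} / #T * ∑ t ∈ T.attach, s t := by
  simp only [batchAvg_eq_sum_mul_hitFreq]
  rw [sum_comm]
  simp only [← mul_sum, sum_hitFreq_of_mem (coe_mem _), ← sum_mul, mul_comm]

end

theorem conditional_single_batch_unbiasedness_general
    {Z : Type*} [Fintype Z] [DecidableEq Z]
    (T : Finset Z) (hT : T.Nonempty) (s : T → ℝ) (m : ℕ) (hm : 1 ≤ m) :
    (∑ x ∈ Finset.univ.filter (fun x : Fin m → Z => 1 ≤ hitCount T x), batchAvg T s x)
        / ((Finset.univ.filter fun x : Fin m → Z => 1 ≤ hitCount T x).card : ℝ)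
      = (∑ t ∈ T.attach, s t) / (T.card : ℝ) := by
  obtain ⟨t, ht⟩ := hT
  have h_hit : (#{x : Fin m → Z | 1 ≤ hitCount T x} : ℝ) ≠ 0 := by
    refine Nat.cast_ne_zero.mpr (card_ne_zero.mpr ⟨fun _ => t, ?_⟩)
    simpa [hitCount_const ht] using hm
  rw [sum_filter_of_ne fun _ _ => one_le_hitCount_of_batchAvg_ne_zero, sum_batchAvg]
  field_simp

/-- **Conditional single-batch unbiasedness.** For a uniform `x ∈ Z^m`,
the conditional expectation of `A(x)` given the event `{N(x) ≥ 1}` equals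
`s_T = (1/|T|) Σ_{t ∈ T} s t`. -/
theorem conditional_single_batch_unbiasedness
    {Z : Type*} [Fintype Z] [DecidableEq Z] [Nonempty Z]
    (T : Finset Z) (hT : T.Nonempty) (s : T → ℝ) (m : ℕ) (hm : 1 ≤ m) :
    (∑ x ∈ Finset.univ.filter (fun x : Fin m → Z => 1 ≤ hitCount T x), batchAvg T s x)
        / ((Finset.univ.filter fun x : Fin m → Z => 1 ≤ hitCount T x).card : ℝ)
      = (∑ t ∈ T.attach, s t) / (T.card : ℝ) :=
  conditional_single_batch_unbiasedness_general T hT s m hm
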